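/- Each of the spaces (N̄^q_{Δ⁻})_0 and (N̄^q_{Δ⁻}), equipped with the norm ‖x‖ = sup_n |τ_n(x)|, is a BK space: it is a Banach space over ℂ (in particular, it is a closed subspace of (N̄^q_{Δ⁻})_∞) and, for each k, the coordinate functional x ↦ x_k is continuous on it. -/

import Mathlib

open Finset Filter Topology

namespace NqDelta

noncomputable section

/-- `Qs q n = ∑_{i=0}^n q i`. -/
def Qs (q : ℕ → ℝ) (n : ℕ) : ℝ := ∑ i ∈ Finset.range (n + 1), q i

/-- The difference operator `(Δ⁻ x)_k = x_{k-1} - x_k`, with `x_{-1} = 0`. -/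
def deltaM (x : ℕ → ℂ) (k : ℕ) : ℂ := (if k = 0 then 0 else x (k - 1)) - x k

/-- `τ_n(x) = (1/Q_n) ∑_{k=0}^n q_k (Δ⁻ x)_k`. -/
def tau (q : ℕ → ℝ) (x : ℕ → ℂ) (n : ℕ) : ℂ :=
  ((Qs q n : ℂ))⁻¹ * ∑ k ∈ Finset.range (n + 1), (q k : ℂ) * deltaM x k

/-- The space `(N̄^q_{Δ⁻})_0 = {x : τ_n(x) → 0}`. -/
def Nzero (q : ℕ → ℝ) : Set (ℕ → ℂ) := {x | Tendsto (tau q x) atTop (𝓝 0)}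

/-- The space `(N̄^q_{Δ⁻}) = {x : (τ_n(x)) converges}`. -/
def Nconv (q : ℕ → ℝ) : Set (ℕ → ℂ) := {x | ∃ l : ℂ, Tendsto (tau q x) atTop (𝓝 l)}

/-- The space `(N̄^q_{Δ⁻})_∞ = {x : sup_n |τ_n(x)| < ∞}`. -/
def Ninf (q : ℕ → ℝ) : Set (ℕ → ℂ) := {x | ∃ M : ℝ, ∀ n, ‖tau q x n‖ ≤ M}

/-- The norm `‖x‖ = sup_n |τ_n(x)|`. -/
def Nnorm (q : ℕ → ℝ) (x : ℕ → ℂ) : ℝ := ⨆ n, ‖tau q x n‖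

/-- The `m`-th section `x^{[m]} = (x_0, …, x_m, 0, 0, …)` of a sequence `x`. -/
def secTrunc (x : ℕ → ℂ) (m : ℕ) : ℕ → ℂ := fun k => if k ≤ m then x k else 0

/-- The sequence `s^{(k)}`: `s^{(k)}_n = Q_k(1/q_{k+1} - 1/q_k)` for `n > k`,
`s^{(k)}_k = -Q_k/q_k`, and `s^{(k)}_n = 0` for `n < k`. -/
def sseq (q : ℕ → ℝ) (k : ℕ) : ℕ → ℂ := fun n =>
  if n < k then 0
  else if n = k then ((-(Qs q k / q k) : ℝ) : ℂ)
  else ((Qs q k * (1 / q (k + 1) - 1 / q k) : ℝ) : ℂ)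

/-- The sequence `s^{(-1)}`, with `s^{(-1)}_n = ∑_{k=0}^{n-1} Q_k(1/q_{k+1} - 1/q_k) - Q_n/q_n`. -/
def sminus (q : ℕ → ℝ) : ℕ → ℂ := fun n =>
  (((∑ k ∈ Finset.range n, Qs q k * (1 / q (k + 1) - 1 / q k)) - Qs q n / q n : ℝ) : ℂ)

/-- The matrix `C = (c_{nk})` associated with a sequence `a`. -/
def Cmat (q : ℕ → ℝ) (a : ℕ → ℂ) (n k : ℕ) : ℂ :=
  if k < n then ((Qs q k * (1 / q (k + 1) - 1 / q k) : ℝ) : ℂ) * ∑ j ∈ Finset.Icc (k + 1) n, a j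
  else if k = n then -(((Qs q n / q n : ℝ) : ℂ) * a n)
  else 0

/-- `exprD q a m = ∑_{k=0}^{m-1} Q_k |(1/q_{k+1} - 1/q_k) ∑_{j=k+1}^m a_j| + |Q_m a_m / q_m|`. -/
def exprD (q : ℕ → ℝ) (a : ℕ → ℂ) (m : ℕ) : ℝ :=
  (∑ k ∈ Finset.range m,
      Qs q k * ‖((1 / q (k + 1) - 1 / q k : ℝ) : ℂ) * ∑ j ∈ Finset.Icc (k + 1) m, a j‖) +
    ‖((Qs q m / q m : ℝ) : ℂ) * a m‖

/-- The space `c₀` of null complex sequences. -/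
def czero : Set (ℕ → ℂ) := {y | Tendsto y atTop (𝓝 0)}

/-- The space `c` of convergent complex sequences. -/
def cconv : Set (ℕ → ℂ) := {y | ∃ l : ℂ, Tendsto y atTop (𝓝 l)}

/-- The space `ℓ_∞` of bounded complex sequences. -/
def linf : Set (ℕ → ℂ) := {y | ∃ M : ℝ, ∀ n, ‖y n‖ ≤ M}

/-- `A ∈ (X, Y)`: for every `x ∈ X` every row series `A_n(x)` converges and `Ax ∈ Y`. -/
def matMem (A : ℕ → ℕ → ℂ) (X Y : Set (ℕ → ℂ)) : Prop :=
  ∀ x ∈ X, ∃ y ∈ Y, ∀ n,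
    Tendsto (fun m => ∑ k ∈ Finset.range (m + 1), A n k * x k) atTop (𝓝 (y n))

/-- Condition (C): `sup_{m,n} exprD q (A n) m < ∞`. -/
def condC (q : ℕ → ℝ) (A : ℕ → ℕ → ℂ) : Prop := ∃ M : ℝ, ∀ m n, exprD q (A n) m ≤ M

/-- `‖A‖^{(s)} = sup_{n > s} sup_m exprD q (A n) m`. -/
def normS (q : ℕ → ℝ) (A : ℕ → ℕ → ℂ) (s : ℕ) : ℝ :=
  ⨆ n, ⨆ (_ : s < n), ⨆ m, exprD q (A n) m

/-- The supremum distance `sup_n |y_n - z_n|` between two sequences. -/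
def supDist (y z : ℕ → ℂ) : ℝ := ⨆ n, ‖y n - z n‖

/-- The Hausdorff measure of noncompactness of `S` as a subset of the metric space `Y`
(with the supremum metric): `inf {ε > 0 : S has a finite ε-net in Y}`. -/
def chiIn (Y S : Set (ℕ → ℂ)) : ℝ :=
  sInf {ε : ℝ | 0 < ε ∧ ∃ T : Finset (ℕ → ℂ), (↑T : Set (ℕ → ℂ)) ⊆ Y ∧
    ∀ y ∈ S, ∃ t ∈ T, supDist y t < ε}

/-- The image `A F` of the closed unit ball `F = {x ∈ X : ‖x‖ ≤ 1}` under the matrix map `A`. -/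
def matImageBall (q : ℕ → ℝ) (A : ℕ → ℕ → ℂ) (X : Set (ℕ → ℂ)) : Set (ℕ → ℂ) :=
  {y | ∃ x, x ∈ X ∧ Nnorm q x ≤ 1 ∧ ∀ n,
    Tendsto (fun m => ∑ k ∈ Finset.range (m + 1), A n k * x k) atTop (𝓝 (y n))}

end

end NqDelta

open NqDelta

/-! `x ↦ τ(x)` is linear, `(N̄^q_{Δ⁻})_0` and `(N̄^q_{Δ⁻})` are the preimages of `c₀` and `c`
under it, and `‖x‖ = ‖τ(x)‖_∞`. The map is injective in a quantitative way: from
`q_n (Δ⁻x)_n = Q_n τ_n(x) - Q_{n-1} τ_{n-1}(x)` and `x_k = -∑_{n ≤ k} (Δ⁻x)_n` one gets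
`|x_k| ≤ C_k ‖x‖`, which is the continuity of the coordinates. Hence a Cauchy sequence `(u_m)`
converges coordinatewise to some `y`; since each `τ_n` only sees finitely many coordinates,
`τ(u_m) → τ(y)` uniformly, and `c₀` and `c` are closed under uniform limits. -/

section SequenceSpaces

variable (R E : Type*) [Semiring R] [TopologicalSpace E] [AddCommMonoid E] [ContinuousAdd E]
  [Module R E] [ContinuousConstSMul R E]

def nullSeqs : Submodule R (ℕ → E) where
  carrier := {f | Tendsto f atTop (𝓝 0)}
  zero_mem' := tendsto_const_nhds
  add_mem' hf hg := by have h := hf.add hg; rwa [add_zero] at h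
  smul_mem' c _ hf := by have h := hf.const_smul c; rwa [smul_zero] at h

def convSeqs : Submodule R (ℕ → E) where
  carrier := {f | ∃ l, Tendsto f atTop (𝓝 l)}
  zero_mem' := ⟨0, tendsto_const_nhds⟩
  add_mem' := fun ⟨a, ha⟩ ⟨b, hb⟩ => ⟨a + b, ha.add hb⟩
  smul_mem' c _ := fun ⟨a, ha⟩ => ⟨c • a, ha.const_smul c⟩

end SequenceSpaces

section NormedSequences

variable {R E : Type*} [Semiring R] [SeminormedAddCommGroup E] [Module R E]
  [ContinuousConstSMul R E] {F : ℕ → ℕ → E} {f : ℕ → E}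

lemma exists_bound_of_mem_convSeqs (hf : f ∈ convSeqs R E) : ∃ M, ∀ n, ‖f n‖ ≤ M := by
  obtain ⟨l, hl⟩ := hf
  obtain ⟨M, hM⟩ := hl.norm.bddAbove_range
  exact ⟨M, fun n => hM (Set.mem_range_self n)⟩

lemma mem_nullSeqs_of_tendstoUniformly (hF : ∀ m, F m ∈ nullSeqs R E)
    (h : TendstoUniformly F f atTop) : f ∈ nullSeqs R E :=
  h.tendsto_of_eventually_tendsto (L := fun _ => 0) (Eventually.of_forall hF) tendsto_const_nhds

lemma mem_convSeqs_of_tendstoUniformly [CompleteSpace E] (hF : ∀ m, F m ∈ convSeqs R E)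
    (h : TendstoUniformly F f atTop) : f ∈ convSeqs R E := by
  refine cauchySeq_tendsto_of_complete (Metric.cauchySeq_iff'.2 fun ε hε => ?_)
  obtain ⟨m, hm⟩ := (Metric.tendstoUniformly_iff.1 h (ε / 3) (by positivity)).exists
  obtain ⟨l, hl⟩ := hF m
  obtain ⟨N, hN⟩ := Metric.cauchySeq_iff'.1 hl.cauchySeq (ε / 3) (by positivity)
  refine ⟨N, fun n hn => ?_⟩
  calc dist (f n) (f N) ≤ dist (f n) (F m n) + dist (F m n) (F m N) + dist (F m N) (f N) :=
        dist_triangle4 _ _ _ _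
    _ < ε / 3 + ε / 3 + ε / 3 := by
        gcongr
        exacts [hm n, hN n hn, dist_comm (f N) _ ▸ hm N]
    _ = ε := by ring

end NormedSequences

namespace NqDelta

variable {q : ℕ → ℝ}

lemma Qs_pos (hq : ∀ k, 0 < q k) (n : ℕ) : 0 < Qs q n :=
  sum_pos (fun i _ => hq i) nonempty_range_add_one

lemma Qs_le_Qs_succ (hq : ∀ k, 0 < q k) (n : ℕ) : Qs q n ≤ Qs q (n + 1) := by
  rw [Qs, Qs, sum_range_succ _ (n + 1)]
  exact le_add_of_nonneg_right (hq _).le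

lemma deltaM_add (x y : ℕ → ℂ) (k : ℕ) : deltaM (x + y) k = deltaM x k + deltaM y k := by
  simp only [deltaM, Pi.add_apply]; split <;> ring

lemma deltaM_smul (a : ℂ) (x : ℕ → ℂ) (k : ℕ) : deltaM (a • x) k = a * deltaM x k := by
  simp only [deltaM, Pi.smul_apply, smul_eq_mul]; split <;> ring

variable (q) in
noncomputable def tauLinearMap : (ℕ → ℂ) →ₗ[ℂ] ℕ → ℂ where
  toFun := tau q
  map_add' x y := funext fun n => by
    simp only [tau, deltaM_add, mul_add, sum_add_distrib, Pi.add_apply]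
  map_smul' a x := funext fun n => by
    simp only [tau, deltaM_smul, mul_sum, Pi.smul_apply, smul_eq_mul, RingHom.id_apply]
    exact sum_congr rfl fun k _ => by ring

lemma tau_add (x y : ℕ → ℂ) (n : ℕ) : tau q (x + y) n = tau q x n + tau q y n :=
  congrFun (map_add (tauLinearMap q) x y) n

lemma tau_sub (x y : ℕ → ℂ) (n : ℕ) : tau q (x - y) n = tau q x n - tau q y n :=
  congrFun (map_sub (tauLinearMap q) x y) n

lemma tau_smul (a : ℂ) (x : ℕ → ℂ) (n : ℕ) : tau q (a • x) n = a * tau q x n :=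
  congrFun (map_smul (tauLinearMap q) a x) n

lemma continuous_tau_apply (n : ℕ) : Continuous fun x : ℕ → ℂ => tau q x n := by
  unfold tau deltaM
  refine continuous_const.mul (continuous_finsetSum _ fun k _ => continuous_const.mul ?_)
  split_ifs <;> fun_prop

lemma sum_deltaM (x : ℕ → ℂ) (k : ℕ) : ∑ n ∈ range (k + 1), deltaM x n = -x k := by
  induction k with
  | zero => simp [deltaM]
  | succ k ih =>
    rw [sum_range_succ, ih]
    simp only [deltaM, Nat.succ_ne_zero, if_false, Nat.add_sub_cancel]
    ring

lemma sum_q_mul_deltaM (hq : ∀ k, 0 < q k) (x : ℕ → ℂ) (n : ℕ) :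
    ∑ k ∈ range (n + 1), (q k : ℂ) * deltaM x k = Qs q n * tau q x n := by
  have h : (Qs q n : ℂ) ≠ 0 := by exact_mod_cast (Qs_pos hq n).ne'
  rw [tau, ← mul_assoc, mul_inv_cancel₀ h, one_mul]

variable (q) in
noncomputable def coordConst (k : ℕ) : ℝ := ∑ n ∈ range (k + 1), 2 * Qs q n / q n

lemma coordConst_pos (hq : ∀ k, 0 < q k) (k : ℕ) : 0 < coordConst q k :=
  sum_pos (fun n _ => by have := Qs_pos hq n; have := hq n; positivity) nonempty_range_add_one

variable {x y : ℕ → ℂ} {B : ℝ}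

lemma norm_Qs_mul_tau_le (hq : ∀ k, 0 < q k) (hB : ∀ n, ‖tau q x n‖ ≤ B) (n : ℕ) :
    ‖(Qs q n : ℂ) * tau q x n‖ ≤ Qs q n * B := by
  rw [norm_mul, Complex.norm_real, Real.norm_of_nonneg (Qs_pos hq n).le]
  exact mul_le_mul_of_nonneg_left (hB n) (Qs_pos hq n).le

lemma norm_sum_range_q_mul_deltaM_le (hq : ∀ k, 0 < q k) (hB : ∀ n, ‖tau q x n‖ ≤ B) (n : ℕ) :
    ‖∑ k ∈ range n, (q k : ℂ) * deltaM x k‖ ≤ Qs q n * B := by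
  have hB0 : 0 ≤ B := (norm_nonneg _).trans (hB 0)
  cases n with
  | zero => simpa using mul_nonneg (Qs_pos hq 0).le hB0
  | succ n =>
    rw [sum_q_mul_deltaM hq]
    exact (norm_Qs_mul_tau_le hq hB n).trans
      (mul_le_mul_of_nonneg_right (Qs_le_Qs_succ hq n) hB0)

lemma norm_deltaM_le (hq : ∀ k, 0 < q k) (hB : ∀ n, ‖tau q x n‖ ≤ B) (n : ℕ) :
    ‖deltaM x n‖ ≤ 2 * Qs q n / q n * B := by
  have hqn : ‖(q n : ℂ)‖ = q n := by rw [Complex.norm_real, Real.norm_of_nonneg (hq n).le]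
  have hsplit : (q n : ℂ) * deltaM x n =
      Qs q n * tau q x n - ∑ k ∈ range n, (q k : ℂ) * deltaM x k := by
    rw [← sum_q_mul_deltaM hq, sum_range_succ]; ring
  rw [div_mul_eq_mul_div, le_div_iff₀ (hq n), mul_comm, ← hqn, ← norm_mul, hsplit]
  calc _ ≤ Qs q n * B + Qs q n * B :=
        norm_sub_le_of_le (norm_Qs_mul_tau_le hq hB n) (norm_sum_range_q_mul_deltaM_le hq hB n)
    _ = _ := by ring

lemma norm_apply_le_coordConst_mul (hq : ∀ k, 0 < q k) (hB : ∀ n, ‖tau q x n‖ ≤ B) (k : ℕ) :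
    ‖x k‖ ≤ coordConst q k * B := by
  calc ‖x k‖ = ‖∑ n ∈ range (k + 1), deltaM x n‖ := by rw [sum_deltaM, norm_neg]
    _ ≤ ∑ n ∈ range (k + 1), 2 * Qs q n / q n * B :=
        (norm_sum_le _ _).trans (sum_le_sum fun n _ => norm_deltaM_le hq hB n)
    _ = coordConst q k * B := by rw [coordConst, sum_mul]

lemma norm_tau_le_Nnorm (hx : x ∈ Ninf q) (n : ℕ) : ‖tau q x n‖ ≤ Nnorm q x := by
  obtain ⟨M, hM⟩ := hx
  exact le_ciSup ⟨M, Set.forall_mem_range.2 hM⟩ n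

lemma sub_mem_Ninf (hx : x ∈ Ninf q) (hy : y ∈ Ninf q) : x - y ∈ Ninf q := by
  obtain ⟨Mx, hMx⟩ := hx
  obtain ⟨My, hMy⟩ := hy
  exact ⟨Mx + My, fun n => by rw [tau_sub]; exact norm_sub_le_of_le (hMx n) (hMy n)⟩

lemma Nnorm_add_le (hx : x ∈ Ninf q) (hy : y ∈ Ninf q) :
    Nnorm q (x + y) ≤ Nnorm q x + Nnorm q y :=
  ciSup_le fun n => by
    rw [tau_add]
    exact norm_add_le_of_le (norm_tau_le_Nnorm hx n) (norm_tau_le_Nnorm hy n)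

lemma Nnorm_smul (a : ℂ) (x : ℕ → ℂ) : Nnorm q (a • x) = ‖a‖ * Nnorm q x := by
  simp only [Nnorm, tau_smul, norm_mul]
  exact (Real.mul_iSup_of_nonneg (norm_nonneg a) _).symm

lemma norm_apply_le_coordConst_mul_Nnorm (hq : ∀ k, 0 < q k) (hx : x ∈ Ninf q) (k : ℕ) :
    ‖x k‖ ≤ coordConst q k * Nnorm q x :=
  norm_apply_le_coordConst_mul hq (norm_tau_le_Nnorm hx) k

lemma norm_apply_lt_of_Nnorm_lt (hq : ∀ k, 0 < q k) (hx : x ∈ Ninf q) {k : ℕ} {ε : ℝ}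
    (h : Nnorm q x < ε / coordConst q k) : ‖x k‖ < ε := by
  have hC := coordConst_pos hq k
  calc ‖x k‖ ≤ coordConst q k * Nnorm q x := norm_apply_le_coordConst_mul_Nnorm hq hx k
    _ < coordConst q k * (ε / coordConst q k) := mul_lt_mul_of_pos_left h hC
    _ = ε := mul_div_cancel₀ ε hC.ne'

lemma Nnorm_eq_zero_iff (hq : ∀ k, 0 < q k) (hx : x ∈ Ninf q) : Nnorm q x = 0 ↔ x = 0 := by
  refine ⟨fun h => funext fun k => norm_le_zero_iff.1 ?_, ?_⟩
  · simpa [h] using norm_apply_le_coordConst_mul_Nnorm hq hx k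
  · rintro rfl
    simp [Nnorm, tau, deltaM]

lemma tendstoUniformly_tau_of_Nnorm_sub {u : ℕ → ℕ → ℂ} (hu : ∀ m, u m - y ∈ Ninf q)
    (h : ∀ ε > (0 : ℝ), ∃ N, ∀ m ≥ N, Nnorm q (u m - y) < ε) :
    TendstoUniformly (fun m => tau q (u m)) (tau q y) atTop := by
  refine Metric.tendstoUniformly_iff.2 fun ε hε => eventually_atTop.2 ?_
  obtain ⟨N, hN⟩ := h ε hε
  refine ⟨N, fun m hm n => ?_⟩
  rw [dist_comm, dist_eq_norm, ← tau_sub]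
  exact (norm_tau_le_Nnorm (hu m) n).trans_lt (hN m hm)

lemma Nnorm_sub_lt_of_tendstoUniformly {u : ℕ → ℕ → ℂ}
    (h : TendstoUniformly (fun m => tau q (u m)) (tau q y) atTop) :
    ∀ ε > (0 : ℝ), ∃ N, ∀ m ≥ N, Nnorm q (u m - y) < ε := by
  intro ε hε
  obtain ⟨N, hN⟩ := eventually_atTop.1 (Metric.tendstoUniformly_iff.1 h (ε / 2) (half_pos hε))
  refine ⟨N, fun m hm => (ciSup_le fun n => ?_).trans_lt (half_lt_self hε)⟩
  rw [tau_sub, ← dist_eq_norm, dist_comm]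
  exact (hN m hm n).le

lemma exists_tendstoUniformly_tau_of_cauchy (hq : ∀ k, 0 < q k) {u : ℕ → ℕ → ℂ}
    (hu : ∀ m, u m ∈ Ninf q)
    (hC : ∀ ε > (0 : ℝ), ∃ N, ∀ m₁ ≥ N, ∀ m₂ ≥ N, Nnorm q (u m₁ - u m₂) < ε) :
    ∃ y, TendstoUniformly (fun m => tau q (u m)) (tau q y) atTop := by
  have hsub : ∀ m₁ m₂, u m₁ - u m₂ ∈ Ninf q := fun _ _ => sub_mem_Ninf (hu _) (hu _)
  have hcoord (k : ℕ) : CauchySeq fun m => u m k := Metric.cauchySeq_iff.2 fun ε hε => by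
    obtain ⟨N, hN⟩ := hC _ (div_pos hε (coordConst_pos hq k))
    exact ⟨N, fun m₁ h₁ m₂ h₂ => by
      rw [dist_eq_norm, ← Pi.sub_apply]
      exact norm_apply_lt_of_Nnorm_lt hq (hsub _ _) (hN m₁ h₁ m₂ h₂)⟩
  choose y hy using fun k => cauchySeq_tendsto_of_complete (hcoord k)
  have hlim : Tendsto u atTop (𝓝 y) := tendsto_pi_nhds.2 hy
  refine ⟨y, tendstoUniformlyOn_univ.1 (UniformCauchySeqOn.tendstoUniformlyOn_of_tendsto ?_
    fun n _ => ((continuous_tau_apply n).tendsto y).comp hlim)⟩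
  refine Metric.uniformCauchySeqOn_iff.2 fun ε hε => ?_
  obtain ⟨N, hN⟩ := hC ε hε
  exact ⟨N, fun m₁ h₁ m₂ h₂ n _ => by
    rw [dist_eq_norm, ← tau_sub]
    exact (norm_tau_le_Nnorm (hsub _ _) n).trans_lt (hN m₁ h₁ m₂ h₂)⟩

end NqDelta

/-- Each of `(N̄^q_{Δ⁻})_0` and `(N̄^q_{Δ⁻})`, with the norm
`‖x‖ = sup_n |τ_n(x)|`, is a BK space: a Banach space over `ℂ` (in particular a closed
subspace of `(N̄^q_{Δ⁻})_∞`) on which every coordinate functional is continuous. -/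
theorem stmt_1 (q : ℕ → ℝ) (hq : ∀ k, 0 < q k) (X : Set (ℕ → ℂ))
    (hX : X = Nzero q ∨ X = Nconv q) :
    -- `X` is a `ℂ`-linear subspace:
    ((0 : ℕ → ℂ) ∈ X) ∧
    (∀ x ∈ X, ∀ y ∈ X, x + y ∈ X) ∧
    (∀ a : ℂ, ∀ x ∈ X, a • x ∈ X) ∧
    -- `Nnorm` is a norm on it:
    (∀ x ∈ X, (Nnorm q x = 0 ↔ x = 0)) ∧
    (∀ x ∈ X, ∀ y ∈ X, Nnorm q (x + y) ≤ Nnorm q x + Nnorm q y) ∧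
    (∀ a : ℂ, ∀ x ∈ X, Nnorm q (a • x) = ‖a‖ * Nnorm q x) ∧
    -- it is a closed subspace of `(N̄^q_{Δ⁻})_∞`:
    X ⊆ Ninf q ∧
    (∀ u : ℕ → (ℕ → ℂ), (∀ m, u m ∈ X) → ∀ y ∈ Ninf q,
      (∀ ε > (0 : ℝ), ∃ N, ∀ m ≥ N, Nnorm q (u m - y) < ε) → y ∈ X) ∧
    -- it is complete (every Cauchy sequence converges in the space):
    (∀ u : ℕ → (ℕ → ℂ), (∀ m, u m ∈ X) →
      (∀ ε > (0 : ℝ), ∃ N, ∀ m₁ ≥ N, ∀ m₂ ≥ N, Nnorm q (u m₁ - u m₂) < ε) →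
      ∃ y ∈ X, ∀ ε > (0 : ℝ), ∃ N, ∀ m ≥ N, Nnorm q (u m - y) < ε) ∧
    -- each coordinate functional `x ↦ x_k` is continuous:
    (∀ k : ℕ, ∀ x ∈ X, ∀ ε > (0 : ℝ), ∃ δ > (0 : ℝ), ∀ y ∈ X,
      Nnorm q (y - x) < δ → ‖y k - x k‖ < ε) := by
  obtain ⟨S, rfl, hS_conv, hS_closed⟩ : ∃ S : Submodule ℂ (ℕ → ℂ),
      X = S.comap (tauLinearMap q) ∧ S ≤ convSeqs ℂ ℂ ∧
      ∀ (F : ℕ → ℕ → ℂ) f, (∀ m, F m ∈ S) → TendstoUniformly F f atTop → f ∈ S := by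
    rcases hX with rfl | rfl
    · exact ⟨nullSeqs ℂ ℂ, rfl, fun f hf => ⟨0, hf⟩, fun _ _ => mem_nullSeqs_of_tendstoUniformly⟩
    · exact ⟨convSeqs ℂ ℂ, rfl, le_rfl, fun _ _ => mem_convSeqs_of_tendstoUniformly⟩
  have hXinf (x) (hx : x ∈ S.comap (tauLinearMap q)) : x ∈ Ninf q :=
    exists_bound_of_mem_convSeqs (hS_conv hx)
  refine ⟨zero_mem _, fun x hx y hy => add_mem hx hy, fun a x hx => Submodule.smul_mem _ a hx,
    fun x hx => Nnorm_eq_zero_iff hq (hXinf x hx),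
    fun x hx y hy => Nnorm_add_le (hXinf x hx) (hXinf y hy), fun a x _ => Nnorm_smul a x,
    hXinf, fun u hu y hy hlim => ?_, fun u hu hC => ?_, fun k x hx ε hε => ?_⟩
  · exact hS_closed _ _ hu (tendstoUniformly_tau_of_Nnorm_sub
      (fun m => sub_mem_Ninf (hXinf _ (hu m)) hy) hlim)
  · obtain ⟨y, hy⟩ := exists_tendstoUniformly_tau_of_cauchy hq (fun m => hXinf _ (hu m)) hC
    exact ⟨y, hS_closed _ _ hu hy, Nnorm_sub_lt_of_tendstoUniformly hy⟩
  · exact ⟨ε / coordConst q k, div_pos hε (coordConst_pos hq k), fun y hy hd =>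
      norm_apply_lt_of_Nnorm_lt hq (sub_mem_Ninf (hXinf y hy) (hXinf x hx)) hd⟩
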